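/- For d ≥ 2 and any fixed i ∈ {1,...,d-1}, Σ_{z ∈ {0,1}^d, z ≠ 0, z_d = 0} [ (d/(d-1))·z_i - (1/(d-1))·|z| ] · π(|z|) = 1/d, where |z| is the number of ones in z, 0 is the all-zero vector, and π(s) = (d-1)/(C(d,s)·s·(d-s)). -/

import Mathlib

/-!
Only subsets `S` of `T = [d] ∖ {d}` occur, and `S = ∅` contributes nothing. Grouping the subsets by
size, the Shapley kernel makes every size class contribute the same amount:
`C(d-2, s) π(s+1) = 1/d` for the sets containing `i`, and `C(d-1, s) s π(s) = (d-1)/d`.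
Hence the sum is `d/(d-1) · (d-1)/d - 1/(d-1) · (d-1)²/d = 1/d`.
-/

open Finset

/-- The Shapley kernel weight `π(s) = (d-1)/(C(d,s)·s·(d-s))`. -/
noncomputable def shapleyKernel (d s : ℕ) : ℝ :=
  ((d : ℝ) - 1) / ((d.choose s : ℝ) * (s : ℝ) * ((d : ℝ) - (s : ℝ)))

/-- The 0-1 indicator vector of a subset `S ⊆ [d]` (the binary vector `z`). -/
def indicatorVec {d : ℕ} (S : Finset (Fin d)) : Fin d → ℝ :=
  fun i => if i ∈ S then 1 else 0

theorem Finset.sum_powerset_filter_mem_apply_card {α M : Type*} [DecidableEq α] [AddCommMonoid M]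
    {s : Finset α} {a : α} (ha : a ∈ s) (f : ℕ → M) :
    ∑ t ∈ s.powerset with a ∈ t, f #t = ∑ m ∈ range #s, (#s - 1).choose m • f (m + 1) := by
  have hout : ∀ t ∈ (s.erase a).powerset, a ∉ t := fun t ht hat =>
    notMem_erase a s (mem_powerset.1 ht hat)
  rw [← card_erase_add_one ha, Nat.add_sub_cancel, ← sum_powerset_apply_card (fun m => f (m + 1)),
    sum_filter]
  conv_lhs => rw [← insert_erase ha, sum_powerset_insert (notMem_erase a s)]
  rw [sum_eq_zero fun t ht => if_neg (hout t ht), zero_add]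
  refine sum_congr rfl fun t ht => ?_
  rw [if_pos (mem_insert_self a t), card_insert_of_notMem (hout t ht)]

theorem choose_mul_shapleyKernel_succ {d s : ℕ} (hs : s + 1 < d) :
    ((d - 2).choose s : ℝ) * shapleyKernel d (s + 1) = 1 / d := by
  obtain ⟨m, rfl⟩ : ∃ m, d = m + s + 2 := ⟨d - s - 2, by omega⟩
  have hsucc : ((m + s + 2 : ℕ) : ℝ) * (m + s + 1).choose s
      = (m + s + 2).choose (s + 1) * (s + 1) := by
    exact_mod_cast Nat.add_one_mul_choose_eq (m + s + 1) s
  have hchoose : ((m + s).choose s : ℝ) * (m + s + 1) = (m + s + 1).choose s * (m + 1) := by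
    have := Nat.choose_mul_succ_eq (m + s) s
    rw [show m + s + 1 - s = m + 1 by omega] at this
    exact_mod_cast this
  push_cast at hsucc
  have hden : ((m + s + 2).choose (s + 1) : ℝ) * (s + 1) * ((m + s + 2) - (s + 1))
      = (m + s + 2) * ((m + s + 2) - 1) * (m + s).choose s := by
    linear_combination (-(m + 1 : ℝ)) * hsucc - (m + s + 2 : ℝ) * hchoose
  have hpos : (0 : ℝ) < (m + s).choose s := by exact_mod_cast Nat.choose_pos (by omega)
  rw [show m + s + 2 - 2 = m + s by omega, shapleyKernel]
  push_cast
  rw [hden]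
  have hd₁ : (m + s + 2 - 1 : ℝ) ≠ 0 := by ring_nf; positivity
  field_simp

theorem choose_mul_mul_shapleyKernel {d s : ℕ} (hs₀ : 0 < s) (hs : s < d) :
    ((d - 1).choose s : ℝ) * s * shapleyKernel d s = ((d : ℝ) - 1) / d := by
  obtain ⟨m, rfl⟩ : ∃ m, d = m + 1 := ⟨d - 1, by omega⟩
  have hchoose : ((m + 1).choose s : ℝ) * (m + 1 - s) = (m + 1) * m.choose s := by
    have := Nat.choose_mul_succ_eq m s
    rw [← Nat.cast_inj (R := ℝ)] at this
    push_cast [Nat.cast_sub hs.le] at this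
    linear_combination -this
  have hpos : (0 : ℝ) < m.choose s := by exact_mod_cast Nat.choose_pos (by omega)
  have hs₀' : (0 : ℝ) < s := by exact_mod_cast hs₀
  rw [Nat.add_sub_cancel, shapleyKernel]
  push_cast
  rw [mul_assoc _ (s : ℝ), mul_right_comm _ (s : ℝ), hchoose]
  field_simp

theorem sum_choose_smul_shapleyKernel_succ {d : ℕ} (hd : 2 ≤ d) :
    ∑ m ∈ range (d - 1), (d - 2).choose m • shapleyKernel d (m + 1) = ((d : ℝ) - 1) / d := by
  rw [sum_congr rfl fun m hm => by
      rw [nsmul_eq_mul, choose_mul_shapleyKernel_succ (by rw [mem_range] at hm; omega)],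
    sum_const, card_range, nsmul_eq_mul, Nat.cast_sub (by omega)]
  ring

theorem sum_choose_smul_mul_shapleyKernel {d : ℕ} (hd : 0 < d) :
    ∑ m ∈ range (d - 1 + 1), (d - 1).choose m • ((m : ℝ) * shapleyKernel d m)
      = ((d : ℝ) - 1) ^ 2 / d := by
  rw [sum_range_succ', sum_congr rfl fun m hm => by
      rw [nsmul_eq_mul, ← mul_assoc,
        choose_mul_mul_shapleyKernel m.succ_pos (by rw [mem_range] at hm; omega)],
    sum_const, card_range, nsmul_eq_mul, Nat.cast_sub hd]
  simp only [CharP.cast_eq_zero, zero_mul, smul_zero, add_zero, Nat.cast_one]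
  ring

theorem sum_last_coord_zero (d : ℕ) (hd : 2 ≤ d) (i : Fin d) (hi : (i : ℕ) < d - 1) :
    ∑ S ∈ univ.powerset.filter
        (fun S : Finset (Fin d) => S ≠ ∅ ∧ (⟨d - 1, by omega⟩ : Fin d) ∉ S),
      (((d : ℝ) / ((d : ℝ) - 1)) * indicatorVec S i -
          (1 / ((d : ℝ) - 1)) * (S.card : ℝ)) * shapleyKernel d S.card =
      1 / (d : ℝ) := by
  have hd₀ : (d : ℝ) ≠ 0 := by positivity
  have hd₁ : (d : ℝ) - 1 ≠ 0 := sub_ne_zero.2 (by exact_mod_cast (by omega : d ≠ 1))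
  set T : Finset (Fin d) := univ.erase ⟨d - 1, by omega⟩
  have hiT : i ∈ T := mem_erase.2 ⟨Fin.ne_of_val_ne hi.ne, mem_univ i⟩
  have hT : #T = d - 1 := by simp [T]
  have hindex : univ.powerset.filter
        (fun S : Finset (Fin d) => S ≠ ∅ ∧ (⟨d - 1, by omega⟩ : Fin d) ∉ S)
      = T.powerset.filter (· ≠ ∅) := by
    ext S
    simp [T, subset_erase, and_comm]
  have hmem : ∑ S ∈ T.powerset, (d : ℝ) / (d - 1) * indicatorVec S i * shapleyKernel d #S = 1 := by
    simp only [indicatorVec, mul_ite, ite_mul, mul_one, mul_zero, zero_mul]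
    rw [← sum_filter, ← mul_sum, sum_powerset_filter_mem_apply_card hiT, hT,
      show d - 1 - 1 = d - 2 by omega, sum_choose_smul_shapleyKernel_succ hd]
    field_simp
  have hcard : ∑ S ∈ T.powerset, 1 / ((d : ℝ) - 1) * #S * shapleyKernel d #S = (d - 1) / d := by
    simp only [mul_assoc]
    rw [← mul_sum, sum_powerset_apply_card (fun m => (m : ℝ) * shapleyKernel d m), hT,
      sum_choose_smul_mul_shapleyKernel (by omega)]
    field_simp
  rw [hindex, sum_filter_of_ne (by rintro S - hS rfl; simp [indicatorVec] at hS)]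
  simp only [sub_mul, sum_sub_distrib, hmem, hcard]
  field_simp
  ring
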